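/- Let ε > 0 and let D = (V,E) be a directed graph with n vertices and m edges such that every vertex has total degree at most (ε²/4)·m. Then there exists a bipartition V = V1 ∪ V2 such that both e(V1,V2) ≥ (1/4 − ε)m and e(V2,V1) ≥ (1/4 − ε)m. -/

import Mathlib

/-!
Average over all bipartitions `(S, Sᶜ)` and write `s_v = ±1` for the side of `v`; for `u ≠ v`
the product `s_u s_v` averages to `0`. Hence `e(S,Sᶜ) + e(Sᶜ,S) = ∑_{uv ∈ E} (1 - s_u s_v)/2` has
mean `m/2` (there are no loops), while `e(S,Sᶜ) - e(Sᶜ,S) = ½ ∑_v s_v (d⁺(v) - d⁻(v))` has mean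
square `¼ ∑_v (d⁺(v) - d⁻(v))² ≤ ¼ · (ε²m/4) · 2m`. By Cauchy–Schwarz the mean of
`|e(S,Sᶜ) - e(Sᶜ,S)|` is at most `2εm`, so some `S` has
`min (e(S,Sᶜ)) (e(Sᶜ,S)) = (sum - |difference|)/2 ≥ m/4 - εm`.
-/

open Finset

/-- The number of directed edges from `X` to `Y`. -/
def eCount {V : Type*} [DecidableEq V] (E : V → V → Prop) [DecidableRel E]
    (X Y : Finset V) : ℕ :=
  ((X ×ˢ Y).filter fun p => E p.1 p.2).card

/-- Outdegree of `v`. -/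
def outDeg {V : Type*} [Fintype V] (E : V → V → Prop) [DecidableRel E] (v : V) : ℕ :=
  (Finset.univ.filter fun w => E v w).card

/-- Indegree of `v`. -/
def inDeg {V : Type*} [Fintype V] (E : V → V → Prop) [DecidableRel E] (v : V) : ℕ :=
  (Finset.univ.filter fun w => E w v).card

/-- Total degree of `v`. -/
def totDeg {V : Type*} [Fintype V] (E : V → V → Prop) [DecidableRel E] (v : V) : ℕ :=
  inDeg E v + outDeg E v

open scoped symmDiff

section Spin
variable {V : Type*} [DecidableEq V]

-- Summing over all `S : Finset V` averages over a uniformly random bipartition `(S, Sᶜ)`.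
def spin (S : Finset V) (v : V) : ℝ := if v ∈ S then 1 else -1

lemma spin_symmDiff_singleton_self (S : Finset V) (u : V) : spin (S ∆ {u}) u = -spin S u := by
  by_cases h : u ∈ S <;> simp [spin, Finset.mem_symmDiff, h]

lemma spin_symmDiff_singleton_of_ne (S : Finset V) {u v : V} (h : v ≠ u) :
    spin (S ∆ {u}) v = spin S v := by
  simp [spin, Finset.mem_symmDiff, h]

lemma spin_mul_self (S : Finset V) (v : V) : spin S v * spin S v = 1 := by
  unfold spin; split_ifs <;> norm_num

variable [Fintype V]

lemma sum_spin_mul_spin (u v : V) :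
    ∑ S : Finset V, spin S u * spin S v = if u = v then 2 ^ Fintype.card V else 0 := by
  split_ifs with huv
  · subst huv
    simp [spin_mul_self, Fintype.card_finset]
  · refine sum_ninvolution (· ∆ {u}) (fun S => ?_) (fun S _ hS => ?_) (fun _ => mem_univ _)
      (fun S => symmDiff_symmDiff_cancel_right _ _)
    · rw [spin_symmDiff_singleton_self, spin_symmDiff_singleton_of_ne _ (Ne.symm huv)]
      ring
    · have hu := congrArg (u ∈ ·) hS
      simp [Finset.mem_symmDiff] at hu

lemma sum_sq_sum_spin_mul (d : V → ℝ) :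
    ∑ S : Finset V, (∑ v, spin S v * d v) ^ 2 = 2 ^ Fintype.card V * ∑ v, d v ^ 2 := by
  calc ∑ S : Finset V, (∑ v, spin S v * d v) ^ 2
      = ∑ u, ∑ v, d u * d v * ∑ S : Finset V, spin S u * spin S v := by
        simp_rw [sq, sum_mul_sum, mul_sum]
        rw [sum_comm]
        refine sum_congr rfl fun u _ => ?_
        rw [sum_comm]
        exact sum_congr rfl fun v _ => sum_congr rfl fun S _ => by ring
    _ = 2 ^ Fintype.card V * ∑ v, d v ^ 2 := by
        simp [sum_spin_mul_spin, mul_sum, sq, mul_comm]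

lemma sum_mem_eq_sum_spin (S : Finset V) (f : V → ℝ) :
    ∑ v ∈ S, f v = ∑ v, (1 + spin S v) / 2 * f v := by
  rw [← sum_ite_mem_eq]
  refine sum_congr rfl fun v _ => ?_
  unfold spin; split_ifs <;> ring

lemma sum_mem_compl_eq_sum_spin (S : Finset V) (f : V → ℝ) :
    ∑ v ∈ Sᶜ, f v = ∑ v, (1 - spin S v) / 2 * f v := by
  rw [← sum_ite_mem_eq]
  refine sum_congr rfl fun v _ => ?_
  unfold spin; split_ifs <;> simp_all

end Spin

section Digraph
variable {V : Type*} (E : V → V → Prop) [DecidableRel E]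

def adj (u v : V) : ℝ := if E u v then 1 else 0

lemma eCount_eq_sum [DecidableEq V] (X Y : Finset V) :
    (eCount E X Y : ℝ) = ∑ u ∈ X, ∑ v ∈ Y, adj E u v := by
  rw [eCount, card_filter, ← sum_product']
  push_cast
  rfl

variable [Fintype V]

lemma outDeg_eq_sum (v : V) : (outDeg E v : ℝ) = ∑ w, adj E v w := by
  rw [outDeg, card_filter]
  push_cast
  rfl

lemma inDeg_eq_sum (v : V) : (inDeg E v : ℝ) = ∑ w, adj E w v := by
  rw [inDeg, card_filter]
  push_cast
  rfl

variable [DecidableEq V]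

lemma sum_totDeg : ∑ v, (totDeg E v : ℝ) = 2 * eCount E univ univ := by
  simp only [totDeg, Nat.cast_add, sum_add_distrib, inDeg_eq_sum, outDeg_eq_sum, eCount_eq_sum]
  rw [sum_comm]
  ring

lemma eCount_add_eCount_compl (S : Finset V) :
    (eCount E S Sᶜ + eCount E Sᶜ S : ℝ)
      = ∑ u, ∑ v, adj E u v * (1 - spin S u * spin S v) / 2 := by
  simp_rw [eCount_eq_sum, sum_mem_eq_sum_spin S, sum_mem_compl_eq_sum_spin S, mul_sum,
    ← sum_add_distrib]
  exact sum_congr rfl fun u _ => sum_congr rfl fun v _ => by ring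

lemma eCount_sub_eCount_compl (S : Finset V) :
    (eCount E S Sᶜ - eCount E Sᶜ S : ℝ) = ∑ v, spin S v * ((outDeg E v - inDeg E v) / 2) := by
  calc (eCount E S Sᶜ - eCount E Sᶜ S : ℝ)
      = ∑ u, ∑ v, spin S u / 2 * adj E u v - ∑ u, ∑ v, spin S v / 2 * adj E u v := by
        simp_rw [eCount_eq_sum, sum_mem_eq_sum_spin S, sum_mem_compl_eq_sum_spin S, mul_sum,
          ← sum_sub_distrib]
        exact sum_congr rfl fun u _ => sum_congr rfl fun v _ => by ring
    _ = ∑ v, spin S v * ((outDeg E v - inDeg E v) / 2) := by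
        rw [sum_comm (f := fun u v => spin S v / 2 * adj E u v), ← sum_sub_distrib]
        refine sum_congr rfl fun v _ => ?_
        rw [outDeg_eq_sum, inDeg_eq_sum, ← mul_sum, ← mul_sum]
        ring

end Digraph

section Moments
variable {V : Type*} [Fintype V] [DecidableEq V] (E : V → V → Prop) [DecidableRel E]

lemma sum_eCount_add_eCount_compl (hirr : ∀ v, ¬ E v v) :
    ∑ S : Finset V, (eCount E S Sᶜ + eCount E Sᶜ S : ℝ)
      = 2 ^ Fintype.card V * eCount E univ univ / 2 := by
  have hpair : ∀ u v, ∑ S : Finset V, adj E u v * (1 - spin S u * spin S v) / 2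
      = 2 ^ Fintype.card V / 2 * adj E u v := fun u v => by
    rw [← sum_div, ← mul_sum, sum_sub_distrib, sum_spin_mul_spin]
    split_ifs with huv
    · simp [huv, adj, hirr]
    · rw [sum_const, card_univ, Fintype.card_finset, sub_zero, nsmul_eq_mul, mul_one]
      push_cast
      ring
  calc ∑ S : Finset V, (eCount E S Sᶜ + eCount E Sᶜ S : ℝ)
      = ∑ u, ∑ v, ∑ S : Finset V, adj E u v * (1 - spin S u * spin S v) / 2 := by
        simp_rw [eCount_add_eCount_compl]
        rw [sum_comm]
        exact sum_congr rfl fun u _ => sum_comm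
    _ = 2 ^ Fintype.card V * eCount E univ univ / 2 := by
        simp_rw [hpair, ← mul_sum, eCount_eq_sum]
        ring

lemma sum_sq_eCount_sub_eCount_compl :
    ∑ S : Finset V, (eCount E S Sᶜ - eCount E Sᶜ S : ℝ) ^ 2
      = 2 ^ Fintype.card V / 4 * ∑ v, (outDeg E v - inDeg E v : ℝ) ^ 2 := by
  simp_rw [eCount_sub_eCount_compl, sum_sq_sum_spin_mul, div_pow, ← sum_div]
  ring

lemma sum_sq_outDeg_sub_inDeg_le {Δ : ℝ} (hΔ : ∀ v, (totDeg E v : ℝ) ≤ Δ) :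
    ∑ v, (outDeg E v - inDeg E v : ℝ) ^ 2 ≤ 2 * Δ * eCount E univ univ := by
  calc ∑ v, (outDeg E v - inDeg E v : ℝ) ^ 2
      ≤ ∑ v, Δ * totDeg E v := sum_le_sum fun v _ => by
        have hv := hΔ v
        simp only [totDeg, Nat.cast_add] at hv ⊢
        nlinarith [(outDeg E v).cast_nonneg (α := ℝ), (inDeg E v).cast_nonneg (α := ℝ)]
    _ = 2 * Δ * eCount E univ univ := by
        rw [← mul_sum, sum_totDeg]
        ring

end Moments

lemma exists_le_and_le_of_sum_add_of_sum_sq_sub {ι : Type*} [Fintype ι] [Nonempty ι]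
    (a b : ι → ℝ) {μ δ : ℝ} (hδ : 0 ≤ δ) (hadd : Fintype.card ι * (2 * μ) ≤ ∑ i, (a i + b i))
    (hsub : ∑ i, (a i - b i) ^ 2 ≤ Fintype.card ι * δ ^ 2) :
    ∃ i, μ - δ / 2 ≤ a i ∧ μ - δ / 2 ≤ b i := by
  have habs : ∑ i, |a i - b i| ≤ Fintype.card ι * δ := by
    refine (pow_le_pow_iff_left₀ (sum_nonneg fun i _ => abs_nonneg _) (by positivity)
      two_ne_zero).mp ?_
    calc (∑ i, |a i - b i|) ^ 2
        ≤ Fintype.card ι * ∑ i, |a i - b i| ^ 2 := sq_sum_le_card_mul_sum_sq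
      _ ≤ (Fintype.card ι * δ) ^ 2 := by
        simp_rw [sq_abs]
        nlinarith [(Fintype.card ι).cast_nonneg (α := ℝ)]
  have hmin : ∑ _i : ι, (μ - δ / 2) ≤ ∑ i, (a i + b i - |a i - b i|) / 2 := by
    rw [sum_const, card_univ, nsmul_eq_mul, ← sum_div, sum_sub_distrib]
    linarith
  obtain ⟨i, -, hi⟩ := exists_le_of_sum_le univ_nonempty hmin
  exact ⟨i, by linarith [neg_abs_le (a i - b i)], by linarith [le_abs_self (a i - b i)]⟩

/-- If every vertex of a directed graph with `m` edges has total degree at most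
`(ε²/4)·m`, then there is a bipartition `V = V₁ ∪ V₂` with
`e(V₁,V₂) ≥ (1/4 - ε)m` and `e(V₂,V₁) ≥ (1/4 - ε)m`. -/
theorem stmt5 {V : Type*} [Fintype V] [DecidableEq V]
    (E : V → V → Prop) [DecidableRel E] (hirr : ∀ v, ¬ E v v)
    (ε : ℝ) (hε : 0 < ε)
    (m : ℕ) (hm : m = eCount E Finset.univ Finset.univ)
    (hdeg : ∀ v : V, (totDeg E v : ℝ) ≤ ε ^ 2 / 4 * m) :
    ∃ V1 : Finset V,
      (eCount E V1 V1ᶜ : ℝ) ≥ (1 / 4 - ε) * m ∧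
      (eCount E V1ᶜ V1 : ℝ) ≥ (1 / 4 - ε) * m := by
  have hN : (Fintype.card (Finset V) : ℝ) = 2 ^ Fintype.card V := by
    rw [Fintype.card_finset, Nat.cast_pow, Nat.cast_ofNat]
  have hmean : Fintype.card (Finset V) * (2 * (m / 4 : ℝ))
      ≤ ∑ S : Finset V, (eCount E S Sᶜ + eCount E Sᶜ S : ℝ) := by
    rw [sum_eCount_add_eCount_compl E hirr, hN, ← hm]
    linarith
  have hvar : ∑ S : Finset V, (eCount E S Sᶜ - eCount E Sᶜ S : ℝ) ^ 2
      ≤ Fintype.card (Finset V) * (2 * ε * m) ^ 2 := by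
    have hdiff := sum_sq_outDeg_sub_inDeg_le E hdeg
    rw [← hm] at hdiff
    calc ∑ S : Finset V, (eCount E S Sᶜ - eCount E Sᶜ S : ℝ) ^ 2
        ≤ 2 ^ Fintype.card V / 4 * (2 * (ε ^ 2 / 4 * m) * m) := by
          rw [sum_sq_eCount_sub_eCount_compl]
          gcongr
      _ ≤ Fintype.card (Finset V) * (2 * ε * m) ^ 2 := by
          rw [hN]
          nlinarith [show 0 ≤ (2 : ℝ) ^ Fintype.card V * (ε * m) ^ 2 by positivity]
  obtain ⟨S, h₁, h₂⟩ := exists_le_and_le_of_sum_add_of_sum_sq_sub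
    (fun S : Finset V => (eCount E S Sᶜ : ℝ)) (fun S => eCount E Sᶜ S) (by positivity) hmean hvar
  exact ⟨S, by linarith, by linarith⟩
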